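/- For any nonzero complex numbers a, b, c, d, the 1-D cluster state |C⟩ = (|0000⟩ + |0101⟩ + |1010⟩ − |1111⟩)/2 and the state |Ψ⟩ = a|0000⟩ − b|0111⟩ − c|1010⟩ + d|1101⟩ are SLOCC equivalent: explicitly, with x = α = −γ/β, y = −cβ/a = −d/(bβ), z = −cγ/a (for suitable nonzero β, γ satisfying the consistency conditions), the invertible matrices A₁ = ½[[1, 1/y],[1/x, 1/z]], A₂ = [[1/p₁₁, 0],[0, −1/p₂₂]], A₃ = ½[[1, β],[α, γ]], A₄ = [[p₁₁/a, 0],[0, p₂₂/(bβ)]] satisfy |C⟩ = (A₁ ⊗ A₂ ⊗ A₃ ⊗ A₄)|Ψ⟩. -/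

import Mathlib

noncomputable section

/-- The 1-D cluster state `|C⟩ = (|0000⟩ + |0101⟩ + |1010⟩ − |1111⟩)/2`. -/
def Cluster1D : Fin 2 → Fin 2 → Fin 2 → Fin 2 → ℂ := fun i j k l =>
  (1 / 2 : ℂ) * ((if (i, j, k, l) = (0, 0, 0, 0) then (1 : ℂ) else 0) +
      (if (i, j, k, l) = (0, 1, 0, 1) then 1 else 0) +
      (if (i, j, k, l) = (1, 0, 1, 0) then 1 else 0) -
      (if (i, j, k, l) = (1, 1, 1, 1) then 1 else 0))

/-- The 2-D cluster state `|Ψ⟩ = a|0000⟩ − b|0111⟩ − c|1010⟩ + d|1101⟩`. -/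
def Cluster2D (a b c d : ℂ) : Fin 2 → Fin 2 → Fin 2 → Fin 2 → ℂ := fun i j k l =>
  a * (if (i, j, k, l) = (0, 0, 0, 0) then (1 : ℂ) else 0) -
  b * (if (i, j, k, l) = (0, 1, 1, 1) then 1 else 0) -
  c * (if (i, j, k, l) = (1, 0, 1, 0) then 1 else 0) +
  d * (if (i, j, k, l) = (1, 1, 0, 1) then 1 else 0)

set_option maxHeartbeats 1000000

/-- for any nonzero `a, b, c, d`, the 1-D cluster state `|C⟩` and
the state `|Ψ⟩ = a|0000⟩ − b|0111⟩ − c|1010⟩ + d|1101⟩` are SLOCC equivalent: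
there are invertible `A₁, A₂, A₃, A₄` with `|C⟩ = (A₁⊗A₂⊗A₃⊗A₄)|Ψ⟩`. -/
theorem cluster_slocc_equivalent (a b c d : ℂ)
    (ha : a ≠ 0) (hb : b ≠ 0) (hc : c ≠ 0) (hd : d ≠ 0) :
    ∃ A₁ A₂ A₃ A₄ : Matrix (Fin 2) (Fin 2) ℂ,
      IsUnit A₁.det ∧ IsUnit A₂.det ∧ IsUnit A₃.det ∧ IsUnit A₄.det ∧
      ∀ i j k l : Fin 2,
        Cluster1D i j k l =
          ∑ i' : Fin 2, ∑ j' : Fin 2, ∑ k' : Fin 2, ∑ l' : Fin 2,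
            A₁ i i' * A₂ j j' * A₃ k k' * A₄ l l' * Cluster2D a b c d i' j' k' l' := by
  obtain ⟨w, hw⟩ := IsAlgClosed.exists_pow_nat_eq (k := ℂ) (a * c / (b * d)) (n := 2)
    (by norm_num)
  have hbd : b * d ≠ 0 := mul_ne_zero hb hd
  have hw' : b * d * w ^ 2 = a * c := by rw [hw]; field_simp
  have hw0 : w ≠ 0 := by
    intro h
    rw [h] at hw'
    simp only [ne_eq, OfNat.ofNat_ne_zero, not_false_iff, zero_pow, mul_zero] at hw'
    exact ha (by simpa [hc] using hw'.symm)
  refine ⟨!![1, b * w / c; 1, -(b * w / c)], !![1, 0; 0, w],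
    !![1 / (4 * a), -(1 / (4 * b * w)); 1 / (4 * a), 1 / (4 * b * w)], !![1, 0; 0, 1],
    ?_, ?_, ?_, ?_, ?_⟩
  · rw [Matrix.det_fin_two_of, isUnit_iff_ne_zero]
    intro h
    field_simp at h
    exact mul_ne_zero (mul_ne_zero hb hw0) hc (by linear_combination (-c / 2) * h)
  · rw [Matrix.det_fin_two_of, isUnit_iff_ne_zero]
    simpa using hw0
  · rw [Matrix.det_fin_two_of, isUnit_iff_ne_zero]
    intro h
    field_simp at h
    exact mul_ne_zero (mul_ne_zero ha hb) hw0 (by linear_combination (a * b * w / 2) * h)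
  · rw [Matrix.det_fin_two_of, isUnit_iff_ne_zero]
    norm_num
  · intro i j k l
    fin_cases i <;> fin_cases j <;> fin_cases k <;> fin_cases l <;>
      simp (config := { decide := true }) only [Cluster1D, Cluster2D, Fin.sum_univ_two,
        Fin.isValue, Matrix.cons_val', Matrix.cons_val_zero, Matrix.cons_val_one,
        Matrix.head_cons, Matrix.empty_val', Matrix.cons_val_fin_one, Matrix.of_apply,
        Prod.mk.injEq, if_true, if_false, Fin.zero_eta, Fin.mk_one, Matrix.vecHead]
    all_goals try ring_nf
    all_goals try field_simp
    all_goals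
      first
        | ring1
        | linear_combination hw'
        | linear_combination -hw'
        | linear_combination 2 * hw'
        | linear_combination (-2) * hw'
        | linear_combination (4*b*w) * hw'
        | linear_combination (-4*b*w) * hw'
        | linear_combination (8*b*w) * hw'
        | linear_combination (-8*b*w) * hw'
        | (rw [eq_div_iff (by intro hz; simp [mul_eq_zero, ha, hb, hc, hw0] at hz)]; ring1)
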